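/- The center of R = F₂(t)[x;σ] equals F₂(s)[x³]: an element of R is central if and only if it can be written as a finite sum Σᵢ aᵢ·x^{3i} where every coefficient aᵢ lies in the subfield F₂(s) of F₂(t) generated by s = (t³+t+1)/(t²+t). -/

import Mathlib

/-!
In `F[x;σ]` the rule `x * a = σ a * x` shows that `∑ aᵢ xⁱ` commutes with the constants iff
`aᵢ = 0` or `σ ^ i = 1` for every `i`, and with `x` iff every `aᵢ` is fixed by `σ`; so if `σ` has
order `d` the center is `F^σ[x^d]`. For `σ t = 1 + t⁻¹` one computes, in characteristic two,
`σ² t = (t + 1)⁻¹` and `σ³ t = t`, so `d = 3`. Moreover `s = t + σ t + σ² t` is fixed by `σ`, and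
`t` is a root of `Y³ + s Y² + (s + 1) Y + 1` over `𝔽₂(s)`. Hence
`[𝔽₂(t) : 𝔽₂(s)] ≤ 3 = [𝔽₂(t) : 𝔽₂(t)^σ]` by Artin's theorem, and `𝔽₂(s) ≤ 𝔽₂(t)^σ` forces
`𝔽₂(s) = 𝔽₂(t)^σ`.
-/

noncomputable section

/-- Left multiplication by the skew variable `x` of the Ore extension `F[x;σ]`
(with zero derivation), as an additive endomorphism of the space `ℕ →₀ F` of
coefficient sequences: it twists all coefficients by `σ` and shifts degrees up by one. -/
def OreX {F : Type*} [Field F] (σ : F →+* F) : AddMonoid.End (ℕ →₀ F) :=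
  (Finsupp.mapDomain.addMonoidHom (· + 1)).comp
    (Finsupp.mapRange.addMonoidHom σ.toAddMonoidHom)

/-- The skew (Ore) polynomial ring `F[x;σ]` with zero derivation, realized concretely
(via its faithful left regular representation) as the subring of `AddMonoid.End (ℕ →₀ F)`
generated by the left multiplications by constants together with left multiplication
by `x`.  Its elements are exactly the maps `∑ i, aᵢ σⁱ(·) xⁱ`, and inside it the
defining commutation rule `x * a = σ a * x` holds. -/
def OreRing {F : Type*} [Field F] (σ : F →+* F) : Subring (AddMonoid.End (ℕ →₀ F)) :=
  Subring.closure (Set.range (Module.toAddMonoidEnd F (ℕ →₀ F)) ∪ {OreX σ})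

/-- The embedding of the coefficient field `F` into the skew polynomial ring `F[x;σ]`. -/
def OreC {F : Type*} [Field F] (σ : F →+* F) : F →+* OreRing σ :=
  (Module.toAddMonoidEnd F (ℕ →₀ F)).codRestrict (OreRing σ) fun a =>
    Subring.subset_closure (Or.inl ⟨a, rfl⟩)

/-- The skew variable `x` of the skew polynomial ring `F[x;σ]`. -/
def Orex {F : Type*} [Field F] (σ : F →+* F) : OreRing σ :=
  ⟨OreX σ, Subring.subset_closure (Or.inr rfl)⟩

open IntermediateField Module

theorem CharTwo.one_add_inv_one_add_inv {K : Type*} [Field K] [CharP K 2] {y : K} (h0 : y ≠ 0)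
    (h1 : y + 1 ≠ 0) : 1 + (1 + y⁻¹)⁻¹ = (y + 1)⁻¹ := by
  refine eq_inv_of_mul_eq_one_left ?_
  field_simp
  linear_combination y * CharTwo.two_eq_zero (R := K)

def RingEquiv.toZModAlgEquiv {n : ℕ} {A : Type*} [Ring A] [Algebra (ZMod n) A] (σ : A ≃+* A) :
    A ≃ₐ[ZMod n] A :=
  AlgEquiv.ofRingEquiv (f := σ) fun c =>
    RingHom.congr_fun (RingHom.ext_zmod (σ.toRingHom.comp (algebraMap _ _)) (algebraMap _ _)) c

@[simp]
theorem RingEquiv.coe_toZModAlgEquiv {n : ℕ} {A : Type*} [Ring A] [Algebra (ZMod n) A]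
    (σ : A ≃+* A) : ⇑(σ.toZModAlgEquiv (n := n)) = σ :=
  rfl

section FixedField
variable {F E : Type*} [Field F] [Field E] [Algebra F E]

theorem mem_fixedField_zpowers_iff (g : E ≃ₐ[F] E) (x : E) :
    x ∈ fixedField (Subgroup.zpowers g) ↔ g x = x := by
  refine ⟨fun h => h ⟨g, Subgroup.mem_zpowers g⟩, fun h f => ?_⟩
  have hg : g ∈ MulAction.stabilizer (E ≃ₐ[F] E) x := h
  exact Subgroup.zpowers_le.mpr hg f.2

theorem fixedField_zpowers_eq_of_finrank_le (g : E ≃ₐ[F] E) {K : IntermediateField F E}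
    [FiniteDimensional K E] (hK : K ≤ fixedField (Subgroup.zpowers g))
    (h : finrank K E ≤ orderOf g) :
    fixedField (Subgroup.zpowers g) = K := by
  have hg : IsOfFinOrder g := orderOf_pos_iff.mp (finrank_pos.trans_le h)
  have : Finite (Subgroup.zpowers g) := hg.finite_zpowers.to_subtype
  have := Fintype.ofFinite (Subgroup.zpowers g)
  have hcard : finrank (fixedField (Subgroup.zpowers g)) E = orderOf g := by
    rw [← Nat.card_zpowers, Nat.card_eq_fintype_card]
    exact FixedPoints.finrank_eq_card (Subgroup.zpowers g) E
  exact (eq_of_le_of_finrank_le' hK (h.trans hcard.ge)).symm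

end FixedField

namespace RatFunc

theorem ringHom_ext_X {p : ℕ} [Fact p.Prime] {R : Type*} [Semiring R]
    {f g : RatFunc (ZMod p) →+* R} (h : f X = g X) : f = g := by
  refine IsLocalization.ringHom_ext (nonZeroDivisors (Polynomial (ZMod p)))
    (Polynomial.ringHom_ext ?_ ?_)
  · exact RingHom.congr_fun (RingHom.ext_zmod ((f.comp (algebraMap _ _)).comp Polynomial.C)
      ((g.comp (algebraMap _ _)).comp Polynomial.C))
  · simpa [algebraMap_X] using h

theorem aeval_X_ne_zero {K : Type*} [Field K] {p : Polynomial K} (hp : p ≠ 0) :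
    Polynomial.aeval (X : RatFunc K) p ≠ 0 :=
  fun h => transcendental_X ⟨p, hp, h⟩

theorem X_add_one_ne_zero {K : Type*} [Field K] : (X : RatFunc K) + 1 ≠ 0 := by
  simpa using aeval_X_ne_zero (Polynomial.X_add_C_ne_zero (1 : K))

theorem X_sq_add_X_add_one_ne_zero {K : Type*} [Field K] : (X : RatFunc K) ^ 2 + X + 1 ≠ 0 := by
  have hp : (Polynomial.X ^ 2 + Polynomial.X + 1 : Polynomial K).Monic := by monicity!
  simpa using aeval_X_ne_zero hp.ne_zero

theorem finiteDimensional_and_finrank_le_of_aeval_X_eq_zero {K : Type*} [Field K]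
    (E : IntermediateField K (RatFunc K)) {p : Polynomial E} (hp : p.Monic)
    (hpX : Polynomial.aeval (RatFunc.X : RatFunc K) p = 0) :
    FiniteDimensional E (RatFunc K) ∧ finrank E (RatFunc K) ≤ p.natDegree := by
  have hint : IsIntegral E (RatFunc.X : RatFunc K) := ⟨p, hp, hpX⟩
  have e := (RatFunc.IntermediateField.adjoinXEquiv E).toLinearEquiv
  have := adjoin.finiteDimensional hint
  refine ⟨e.finiteDimensional, ?_⟩
  rw [← e.finrank_eq, adjoin.finrank hint]
  exact Polynomial.natDegree_le_of_dvd (minpoly.dvd E _ hpX) hp.ne_zero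

end RatFunc

namespace OreRing

variable {F : Type*} [Field F] (σ : F →+* F)

theorem oreX_single (m : ℕ) (c : F) :
    OreX σ (Finsupp.single m c) = Finsupp.single (m + 1) (σ c) := by
  change Finsupp.mapDomain (· + 1) (Finsupp.mapRange σ (map_zero σ) (Finsupp.single m c)) = _
  rw [Finsupp.mapRange_single, Finsupp.mapDomain_single]

theorem oreX_apply_succ (f : ℕ →₀ F) (k : ℕ) : OreX σ f (k + 1) = σ (f k) := by
  change Finsupp.mapDomain (· + 1) (Finsupp.mapRange σ (map_zero σ) f) (k + 1) = _
  rw [Finsupp.mapDomain_apply (add_left_injective 1), Finsupp.mapRange_apply]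

theorem oreX_pow_single (i m : ℕ) (c : F) :
    (OreX σ ^ i) (Finsupp.single m c) = Finsupp.single (m + i) ((σ ^ i) c) := by
  induction i generalizing m c with
  | zero => simp
  | succ i ih =>
    rw [pow_succ, AddMonoid.End.coe_mul, Function.comp_apply, oreX_single, ih, pow_succ,
      RingHom.coe_mul, Function.comp_apply, add_right_comm, add_assoc]

theorem oreC_apply (a : F) (f : ℕ →₀ F) : (OreC σ a : AddMonoid.End (ℕ →₀ F)) f = a • f :=
  rfl

theorem coe_orex : (Orex σ : AddMonoid.End (ℕ →₀ F)) = OreX σ :=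
  rfl

theorem monomial_apply_single (a : F) (i m : ℕ) (c : F) :
    ((OreC σ a * Orex σ ^ i : OreRing σ) : AddMonoid.End (ℕ →₀ F)) (Finsupp.single m c) =
      Finsupp.single (m + i) (a * (σ ^ i) c) := by
  rw [MulMemClass.coe_mul, SubmonoidClass.coe_pow, coe_orex, AddMonoid.End.coe_mul,
    Function.comp_apply, oreX_pow_single, oreC_apply, Finsupp.smul_single, smul_eq_mul]

theorem orex_mul_oreC (a : F) : Orex σ * OreC σ a = OreC σ (σ a) * Orex σ := by
  refine Subtype.ext (Finsupp.addHom_ext fun m c => ?_)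
  change OreX σ (a • Finsupp.single m c) = σ a • OreX σ (Finsupp.single m c)
  rw [Finsupp.smul_single, oreX_single, oreX_single, Finsupp.smul_single, smul_eq_mul, smul_eq_mul,
    map_mul]

theorem orex_pow_mul_oreC (i : ℕ) (a : F) :
    Orex σ ^ i * OreC σ a = OreC σ ((σ ^ i) a) * Orex σ ^ i := by
  induction i with
  | zero => simp
  | succ i ih =>
    rw [pow_succ', mul_assoc, ih, ← mul_assoc, orex_mul_oreC, mul_assoc, ← pow_succ', pow_succ' σ,
      RingHom.coe_mul, Function.comp_apply]

theorem monomial_mul_monomial (a b : F) (i j : ℕ) :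
    OreC σ a * Orex σ ^ i * (OreC σ b * Orex σ ^ j) =
      OreC σ (a * (σ ^ i) b) * Orex σ ^ (i + j) := by
  rw [mul_assoc, ← mul_assoc (Orex σ ^ i), orex_pow_mul_oreC, map_mul, pow_add]
  noncomm_ring

theorem closure_range_oreC_union_orex :
    Subring.closure (Set.range (OreC σ) ∪ {Orex σ}) = ⊤ := by
  refine eq_top_iff.2 ?_
  rintro ⟨z, hz⟩ -
  induction hz using Subring.closure_induction with
  | mem z hz =>
    rcases hz with ⟨a, rfl⟩ | rfl
    exacts [Subring.subset_closure (Or.inl ⟨a, rfl⟩), Subring.subset_closure (Or.inr rfl)]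
  | zero => exact Subring.zero_mem _
  | one => exact Subring.one_mem _
  | add _ _ _ _ hx hy => exact Subring.add_mem _ hx hy
  | neg _ _ hx => exact Subring.neg_mem _ hx
  | mul _ _ _ _ hx hy => exact Subring.mul_mem _ hx hy

theorem eq_top_of_oreC_mem_of_orex_mem {S : Subring (OreRing σ)} (hC : ∀ a, OreC σ a ∈ S)
    (hx : Orex σ ∈ S) : S = ⊤ := by
  refine top_le_iff.1 (closure_range_oreC_union_orex σ ▸ Subring.closure_le.2 ?_)
  rintro _ (⟨a, rfl⟩ | rfl)
  exacts [hC a, hx]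

def ofCoeff : (ℕ →₀ F) →+ OreRing σ :=
  Finsupp.liftAddHom fun i => (AddMonoidHom.mulRight (Orex σ ^ i)).comp (OreC σ).toAddMonoidHom

theorem ofCoeff_single (i : ℕ) (a : F) :
    ofCoeff σ (Finsupp.single i a) = OreC σ a * Orex σ ^ i :=
  Finsupp.liftAddHom_apply_single _ i a

theorem ofCoeff_apply (p : ℕ →₀ F) :
    ofCoeff σ p = p.sum fun i a => OreC σ a * Orex σ ^ i :=
  Finsupp.liftAddHom_apply _ p

/-- `OreRing σ` acts on `ℕ →₀ F` as `F[x;σ]` acts on itself by left multiplication, so the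
coefficients of `z` are those of `z 1`. -/
def coeff : OreRing σ →+ (ℕ →₀ F) where
  toFun z := (z : AddMonoid.End (ℕ →₀ F)) (Finsupp.single 0 1)
  map_zero' := rfl
  map_add' _ _ := rfl

theorem coeff_ofCoeff (p : ℕ →₀ F) : coeff σ (ofCoeff σ p) = p := by
  induction p using Finsupp.induction_linear with
  | zero => simp
  | add p q hp hq => rw [map_add, map_add, hp, hq]
  | single i a =>
    rw [ofCoeff_single]
    change ((OreC σ a * Orex σ ^ i : OreRing σ) : AddMonoid.End (ℕ →₀ F)) _ = _
    rw [monomial_apply_single, zero_add, map_one, mul_one]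

theorem ofCoeff_mul_ofCoeff_mem_range (p q : ℕ →₀ F) :
    ofCoeff σ p * ofCoeff σ q ∈ (ofCoeff σ).range := by
  induction p using Finsupp.induction_linear with
  | zero => rw [map_zero, zero_mul]; exact zero_mem _
  | add p p' hp hp' => rw [map_add, add_mul]; exact add_mem hp hp'
  | single i a =>
    induction q using Finsupp.induction_linear with
    | zero => rw [map_zero, mul_zero]; exact zero_mem _
    | add q q' hq hq' => rw [map_add, mul_add]; exact add_mem hq hq'
    | single j b =>
      rw [ofCoeff_single, ofCoeff_single, monomial_mul_monomial, ← ofCoeff_single]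
      exact ⟨_, rfl⟩

theorem ofCoeff_surjective : Function.Surjective (ofCoeff σ) := by
  let S : Subring (OreRing σ) :=
    { (ofCoeff σ).range with
      one_mem' := ⟨Finsupp.single 0 1, by rw [ofCoeff_single, map_one, pow_zero, one_mul]⟩
      mul_mem' := by
        rintro _ _ ⟨p, rfl⟩ ⟨q, rfl⟩
        exact ofCoeff_mul_ofCoeff_mem_range σ p q }
  have hS : S = ⊤ := eq_top_of_oreC_mem_of_orex_mem σ
    (fun a => ⟨Finsupp.single 0 a, by simp [ofCoeff_single]⟩)
    ⟨Finsupp.single 1 1, by simp [ofCoeff_single]⟩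
  exact fun z => (hS ▸ Subring.mem_top z : z ∈ S)

theorem ofCoeff_coeff (z : OreRing σ) : ofCoeff σ (coeff σ z) = z := by
  obtain ⟨p, rfl⟩ := ofCoeff_surjective σ z
  rw [coeff_ofCoeff]

theorem apply_single_apply_add (z : OreRing σ) (m k : ℕ) (c : F) :
    (z : AddMonoid.End (ℕ →₀ F)) (Finsupp.single m c) (k + m) = coeff σ z k * (σ ^ k) c := by
  rw [← ofCoeff_coeff σ z, coeff_ofCoeff]
  induction coeff σ z using Finsupp.induction_linear with
  | zero => simp
  | add p q hp hq =>
    rw [map_add (ofCoeff σ) p q, Finsupp.add_apply, add_mul, ← hp, ← hq]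
    rfl
  | single i a =>
    rw [ofCoeff_single, monomial_apply_single, Finsupp.single_apply, Finsupp.single_apply]
    by_cases h : i = k
    · subst h
      simp [add_comm]
    · rw [if_neg (by omega), if_neg h, zero_mul]

theorem coeff_mul_oreC (z : OreRing σ) (c : F) (k : ℕ) :
    coeff σ (z * OreC σ c) k = coeff σ z k * (σ ^ k) c := by
  change (z : AddMonoid.End (ℕ →₀ F)) (c • Finsupp.single 0 1) (k + 0) = _
  rw [Finsupp.smul_single, smul_eq_mul, mul_one, apply_single_apply_add]

theorem coeff_oreC_mul (c : F) (z : OreRing σ) (k : ℕ) :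
    coeff σ (OreC σ c * z) k = c * coeff σ z k :=
  rfl

theorem coeff_mul_orex_succ (z : OreRing σ) (k : ℕ) :
    coeff σ (z * Orex σ) (k + 1) = coeff σ z k := by
  change (z : AddMonoid.End (ℕ →₀ F)) (OreX σ (Finsupp.single 0 1)) (k + 1) = _
  rw [oreX_single, map_one, apply_single_apply_add, map_one, mul_one]

theorem coeff_orex_mul_succ (z : OreRing σ) (k : ℕ) :
    coeff σ (Orex σ * z) (k + 1) = σ (coeff σ z k) :=
  oreX_apply_succ σ _ k

theorem monomial_mem_center {a : F} {i : ℕ} (ha : σ a = a) (hi : σ ^ i = 1) :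
    OreC σ a * Orex σ ^ i ∈ Subring.center (OreRing σ) := by
  have hS := eq_top_of_oreC_mem_of_orex_mem σ
    (S := Subring.centralizer {OreC σ a * Orex σ ^ i}) ?_ ?_
  · refine Subring.mem_center_iff.2 fun g => ?_
    have hg : g ∈ Subring.centralizer {OreC σ a * Orex σ ^ i} := hS ▸ Subring.mem_top g
    exact (Subring.mem_centralizer_iff.1 hg _ rfl).symm
  · refine fun c => Subring.mem_centralizer_iff.2 ?_
    rintro _ rfl
    rw [mul_assoc, orex_pow_mul_oreC, hi, RingHom.coe_one, id, ← mul_assoc, ← map_mul,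
      mul_comm a c, map_mul, mul_assoc]
  · refine Subring.mem_centralizer_iff.2 ?_
    rintro _ rfl
    rw [mul_assoc, ← pow_succ, ← mul_assoc, orex_mul_oreC, ha, mul_assoc, ← pow_succ']

theorem mem_center_iff (z : OreRing σ) :
    z ∈ Subring.center (OreRing σ) ↔
      ∀ k, σ (coeff σ z k) = coeff σ z k ∧ (coeff σ z k = 0 ∨ σ ^ k = 1) := by
  constructor
  · intro hz k
    rw [Subring.mem_center_iff] at hz
    refine ⟨?_, or_iff_not_imp_left.2 fun hk => RingHom.ext fun c => mul_left_cancel₀ hk ?_⟩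
    · rw [← coeff_orex_mul_succ, hz, coeff_mul_orex_succ]
    · rw [← coeff_mul_oreC, ← hz, coeff_oreC_mul, mul_comm, RingHom.coe_one, id]
  · intro h
    rw [← ofCoeff_coeff σ z, ofCoeff_apply]
    refine Subring.sum_mem _ fun k hk => ?_
    obtain ⟨hfix, h0 | hk1⟩ := h k
    · exact absurd h0 (Finsupp.mem_support_iff.1 hk)
    · exact monomial_mem_center σ hfix hk1

theorem mem_center_iff_exists_sum (hσ : IsOfFinOrder σ) (z : OreRing σ) :
    z ∈ Subring.center (OreRing σ) ↔ ∃ (n : ℕ) (a : ℕ → F), (∀ i, σ (a i) = a i) ∧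
      z = ∑ i ∈ Finset.range n, OreC σ (a i) * Orex σ ^ (orderOf σ * i) := by
  refine ⟨fun hz => ?_, ?_⟩
  · rw [mem_center_iff] at hz
    set p := coeff σ z
    set n := p.support.sup id + 1
    have hsupp : p.support ⊆ (Finset.range n).image (orderOf σ * ·) := by
      intro k hk
      obtain ⟨j, rfl⟩ := orderOf_dvd_iff_pow_eq_one.2
        ((hz k).2.resolve_left (Finsupp.mem_support_iff.1 hk))
      refine Finset.mem_image.2 ⟨j, Finset.mem_range.2 (Nat.lt_succ_of_le ?_), rfl⟩
      exact (Nat.le_mul_of_pos_left j hσ.orderOf_pos).trans (Finset.le_sup (f := id) hk)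
    refine ⟨n, fun i => p (orderOf σ * i), fun i => (hz _).1, ?_⟩
    rw [← ofCoeff_coeff σ z, ofCoeff_apply,
      Finsupp.sum_of_support_subset _ hsupp _ fun _ _ => by rw [map_zero, zero_mul],
      Finset.sum_image fun i _ j _ h => Nat.eq_of_mul_eq_mul_left hσ.orderOf_pos h]
  · rintro ⟨n, a, ha, rfl⟩
    exact Subring.sum_mem _ fun i _ =>
      monomial_mem_center σ (ha i) (orderOf_dvd_iff_pow_eq_one.1 (dvd_mul_right _ _))

end OreRing

open RatFunc

theorem finiteDimensional_adjoin_and_finrank_le_three {s : RatFunc (ZMod 2)}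
    (hs : s = (X ^ 3 + X + 1) / (X ^ 2 + X)) :
    FiniteDimensional (ZMod 2)⟮s⟯ (RatFunc (ZMod 2)) ∧
      finrank (ZMod 2)⟮s⟯ (RatFunc (ZMod 2)) ≤ 3 := by
  have hden : (X : RatFunc (ZMod 2)) ^ 2 + X ≠ 0 := by
    rw [sq, ← mul_add_one]
    exact mul_ne_zero X_ne_zero X_add_one_ne_zero
  have hs' : s * (X ^ 2 + X) = X ^ 3 + X + 1 := by rw [hs, div_mul_cancel₀ _ hden]
  set t : (ZMod 2)⟮s⟯ := ⟨s, mem_adjoin_simple_self _ s⟩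
  let p : Polynomial (ZMod 2)⟮s⟯ := Polynomial.X ^ 3 + Polynomial.C t * Polynomial.X ^ 2 +
    Polynomial.C (t + 1) * Polynomial.X + 1
  have hp : p.Monic := by simp only [p]; monicity!
  have hdeg : p.natDegree = 3 := by simp only [p]; compute_degree!
  rw [← hdeg]
  refine finiteDimensional_and_finrank_le_of_aeval_X_eq_zero _ hp ?_
  have ht : algebraMap (ZMod 2)⟮s⟯ (RatFunc (ZMod 2)) t = s := rfl
  simp only [p, map_add, map_mul, map_pow, map_one, Polynomial.aeval_X, Polynomial.aeval_C, ht]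
  linear_combination hs' + (X ^ 3 + X + 1) * CharTwo.two_eq_zero (R := RatFunc (ZMod 2))

section Sigma
variable {σ : RatFunc (ZMod 2) ≃+* RatFunc (ZMod 2)} (hX : σ X = (X + 1) / X)
include hX

theorem apply_X_eq_one_add_inv : σ X = 1 + X⁻¹ := by
  rw [hX, add_div, div_self X_ne_zero, one_div]

theorem apply_apply_X : σ (σ X) = (X + 1)⁻¹ := by
  rw [apply_X_eq_one_add_inv hX, map_add, map_one, map_inv₀, apply_X_eq_one_add_inv hX,
    CharTwo.one_add_inv_one_add_inv X_ne_zero X_add_one_ne_zero]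

theorem toRingHom_pow_three : σ.toRingHom ^ 3 = 1 := by
  refine ringHom_ext_X ?_
  change σ (σ (σ X)) = X
  rw [apply_apply_X hX, map_inv₀, map_add, map_one, apply_X_eq_one_add_inv hX, add_right_comm,
    CharTwo.add_self_eq_zero, zero_add, inv_inv]

theorem apply_apply_apply (a : RatFunc (ZMod 2)) : σ (σ (σ a)) = a := by
  simpa using RingHom.congr_fun (toRingHom_pow_three hX) a

theorem apply_X_ne_X : σ X ≠ X := by
  rw [apply_X_eq_one_add_inv hX]
  intro h
  apply X_sq_add_X_add_one_ne_zero (K := ZMod 2)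
  have := X_ne_zero (K := ZMod 2)
  field_simp at h
  linear_combination -h + (X + 1) * CharTwo.two_eq_zero (R := RatFunc (ZMod 2))

theorem orderOf_toRingHom : orderOf σ.toRingHom = 3 := by
  have : Fact (Nat.Prime 3) := ⟨Nat.prime_three⟩
  exact orderOf_eq_prime (toRingHom_pow_three hX) fun h =>
    apply_X_ne_X hX (RingHom.congr_fun h X)

theorem eq_X_add_apply_X_add_apply_apply_X {s : RatFunc (ZMod 2)}
    (hs : s = (X ^ 3 + X + 1) / (X ^ 2 + X)) : s = X + σ X + σ (σ X) := by
  have h0 := X_ne_zero (K := ZMod 2)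
  have h1 := X_add_one_ne_zero (K := ZMod 2)
  rw [hs, apply_apply_X hX, apply_X_eq_one_add_inv hX]
  field_simp
  linear_combination (-X - X ^ 2) * CharTwo.two_eq_zero (R := RatFunc (ZMod 2))

theorem apply_eq_self_iff_mem_adjoin {s : RatFunc (ZMod 2)}
    (hs : s = (X ^ 3 + X + 1) / (X ^ 2 + X)) (a : RatFunc (ZMod 2)) :
    σ a = a ↔ a ∈ (ZMod 2)⟮s⟯ := by
  let g : RatFunc (ZMod 2) ≃ₐ[ZMod 2] RatFunc (ZMod 2) := σ.toZModAlgEquiv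
  have hs_fixed : g s = s := by
    change σ s = s
    rw [eq_X_add_apply_X_add_apply_apply_X hX hs, map_add, map_add, apply_apply_apply hX]
    ring
  have hg : orderOf g = 3 := by
    have : Fact (Nat.Prime 3) := ⟨Nat.prime_three⟩
    refine orderOf_eq_prime (AlgEquiv.ext fun a => ?_) fun h =>
      apply_X_ne_X hX (AlgEquiv.congr_fun h X)
    simpa [g] using apply_apply_apply hX a
  obtain ⟨_, hrank⟩ := finiteDimensional_adjoin_and_finrank_le_three hs
  rw [← fixedField_zpowers_eq_of_finrank_le g
    (adjoin_simple_le_iff.2 ((mem_fixedField_zpowers_iff g s).2 hs_fixed)) (hg ▸ hrank),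
    mem_fixedField_zpowers_iff]
  rfl

end Sigma

theorem center_eq_invariant_subfield_adjoin_x_cubed_general
    (σ : RatFunc (ZMod 2) ≃+* RatFunc (ZMod 2))
    (hX : σ RatFunc.X = (RatFunc.X + 1) / RatFunc.X)
    (s : RatFunc (ZMod 2))
    (hs : s = (RatFunc.X ^ 3 + RatFunc.X + 1) / (RatFunc.X ^ 2 + RatFunc.X))
    (z : OreRing σ.toRingHom) :
    (∀ y : OreRing σ.toRingHom, z * y = y * z) ↔
      ∃ (n : ℕ) (a : ℕ → RatFunc (ZMod 2)),
        (∀ i, a i ∈ IntermediateField.adjoin (ZMod 2) {s}) ∧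
        z = ∑ i ∈ Finset.range n, OreC σ.toRingHom (a i) * Orex σ.toRingHom ^ (3 * i) := by
  have horder := orderOf_toRingHom hX
  have hcentral : (∀ y, z * y = y * z) ↔ z ∈ Subring.center (OreRing σ.toRingHom) := by
    rw [Subring.mem_center_iff]
    exact forall_congr' fun y => eq_comm
  rw [hcentral, OreRing.mem_center_iff_exists_sum _ (orderOf_pos_iff.1 (horder ▸ three_pos)),
    horder]
  simp only [RingEquiv.toRingHom_eq_coe, RingEquiv.coe_toRingHom,
    apply_eq_self_iff_mem_adjoin hX hs]

/-- The center of `R = 𝔽₂(t)[x;σ]` (where `σ(t) = (t+1)/t`) equals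
`𝔽₂(s)[x³]`: an element of `R` is central if and only if it can be written as a finite
sum `Σᵢ aᵢ·x^{3i}` where every coefficient `aᵢ` lies in the subfield `𝔽₂(s)` of
`𝔽₂(t)` generated by `s = (t³+t+1)/(t²+t)`. -/
theorem center_eq_invariant_subfield_adjoin_x_cubed
    (σ : RatFunc (ZMod 2) ≃+* RatFunc (ZMod 2))
    (hfix : ∀ c : ZMod 2, σ (RatFunc.C c) = RatFunc.C c)
    (hX : σ RatFunc.X = (RatFunc.X + 1) / RatFunc.X)
    (s : RatFunc (ZMod 2))
    (hs : s = (RatFunc.X ^ 3 + RatFunc.X + 1) / (RatFunc.X ^ 2 + RatFunc.X))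
    (z : OreRing σ.toRingHom) :
    (∀ y : OreRing σ.toRingHom, z * y = y * z) ↔
      ∃ (n : ℕ) (a : ℕ → RatFunc (ZMod 2)),
        (∀ i, a i ∈ IntermediateField.adjoin (ZMod 2) {s}) ∧
        z = ∑ i ∈ Finset.range n, OreC σ.toRingHom (a i) * Orex σ.toRingHom ^ (3 * i) :=
  center_eq_invariant_subfield_adjoin_x_cubed_general σ hX s hs z
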